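/- Let n×n real symmetric matrices r ∈ Γ₂⁺, x ∈ ℝ, Y ∈ ℝⁿ, with F(x, r, Y) := x·σ_2(r) - YᵀT_1(r)Y > 0. Then G(x, r, Y) = log F(x, r, Y) is concave on this domain. -/

import Mathlib

open Matrix

/-- The Lorentzian quadratic form `σ₂`-polarization on matrices. -/
noncomputable def qb {n : ℕ} (A B : Matrix (Fin n) (Fin n) ℝ) : ℝ :=
  (A.trace * B.trace - (A * B).trace) / 2

lemma qb_expand {n : ℕ} (c d : ℝ) (A B : Matrix (Fin n) (Fin n) ℝ) :
    qb (c • A + d • B) (c • A + d • B)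
      = c^2 * qb A A + (2*c*d) * qb A B + d^2 * qb B B := by
  simp only [qb, Matrix.add_mul, Matrix.mul_add, Matrix.smul_mul, Matrix.mul_smul,
    Matrix.trace_add, Matrix.trace_smul, smul_eq_mul]
  rw [Matrix.trace_mul_comm B A]
  ring

lemma trace_sq_eq {n : ℕ} (A : Matrix (Fin n) (Fin n) ℝ) (hA : A.IsSymm) :
    (A * A).trace = ∑ i, ∑ j, (A i j)^2 := by
  simp only [Matrix.trace, Matrix.diag, Matrix.mul_apply, sq]
  exact Finset.sum_congr rfl fun i _ => Finset.sum_congr rfl fun j _ => by rw [hA.apply]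

lemma trace_sq_nonneg {n : ℕ} (A : Matrix (Fin n) (Fin n) ℝ) (hA : A.IsSymm) :
    0 ≤ (A * A).trace := by
  rw [trace_sq_eq A hA]
  exact Finset.sum_nonneg fun i _ => Finset.sum_nonneg fun j _ => sq_nonneg _

lemma qb_self_nonpos {n : ℕ} (A : Matrix (Fin n) (Fin n) ℝ) (hA : A.IsSymm)
    (h : A.trace = 0) : qb A A ≤ 0 := by
  have := trace_sq_nonneg A hA
  simp only [qb, h]
  nlinarith

lemma isSymm_comb {n : ℕ} (c d : ℝ) {A B : Matrix (Fin n) (Fin n) ℝ}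
    (hA : A.IsSymm) (hB : B.IsSymm) : (c • A + d • B).IsSymm := by
  unfold Matrix.IsSymm at *
  rw [Matrix.transpose_add, Matrix.transpose_smul, Matrix.transpose_smul, hA, hB]

/-- Reverse Cauchy–Schwarz for the Lorentzian form `qb` on the positive cone. -/
lemma qb_cs {n : ℕ} {A B : Matrix (Fin n) (Fin n) ℝ} (hA : A.IsSymm) (hB : B.IsSymm)
    (htA : 0 < A.trace) (hqA : 0 < qb A A)
    (htB : 0 ≤ B.trace) (hqB : 0 ≤ qb B B) :
    Real.sqrt (qb A A * qb B B) ≤ qb A B := by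
  set t := B.trace / A.trace with htdef
  have htnn : 0 ≤ t := div_nonneg htB htA.le
  have h1 : ((1:ℝ) • B + (-t) • A).trace = 0 := by
    simp only [Matrix.trace_add, Matrix.trace_smul, smul_eq_mul, one_mul, neg_mul, htdef]
    field_simp
    ring
  have h3 : qb ((1:ℝ) • B + (-t) • A) ((1:ℝ) • B + (-t) • A) ≤ 0 :=
    qb_self_nonpos _ (isSymm_comb 1 (-t) hB hA) h1
  rw [qb_expand] at h3
  have hcomm : qb B A = qb A B := by
    unfold qb; rw [Matrix.trace_mul_comm]; ring
  rw [hcomm] at h3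
  rcases eq_or_lt_of_le htB with h0 | hpos
  · have ht0 : t = 0 := by rw [htdef, ← h0, zero_div]
    rw [ht0] at h3
    have hBB : qb B B = 0 := le_antisymm (by nlinarith) hqB
    have htr : (B * B).trace = 0 := by
      have : B.trace = 0 := h0.symm
      simp only [qb, this] at hBB
      nlinarith
    have hB0 : B = 0 := by
      rw [trace_sq_eq B hB] at htr
      ext i j
      have h5 := (Finset.sum_eq_zero_iff_of_nonneg
        (fun i _ => Finset.sum_nonneg fun j _ => sq_nonneg (B i j))).mp htr i (Finset.mem_univ i)
      have h6 := (Finset.sum_eq_zero_iff_of_nonneg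
        (fun j _ => sq_nonneg (B i j))).mp h5 j (Finset.mem_univ j)
      simpa [sq] using pow_eq_zero_iff (n := 2) (by norm_num) |>.mp h6
    simp [hB0, qb, Real.sqrt_eq_zero']
  · have ht0 : 0 < t := div_pos hpos htA
    have key : 2 * t * Real.sqrt (qb A A * qb B B) ≤ 2 * t * qb A B := by
      have hs : Real.sqrt (qb A A * qb B B) = Real.sqrt (qb A A) * Real.sqrt (qb B B) :=
        Real.sqrt_mul hqA.le _
      nlinarith [sq_nonneg (Real.sqrt (qb B B) - t * Real.sqrt (qb A A)),
        Real.sq_sqrt hqA.le, Real.sq_sqrt hqB,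
        Real.sqrt_nonneg (qb A A), Real.sqrt_nonneg (qb B B)]
    exact le_of_mul_le_mul_left key (by linarith)

lemma vecMulVec_isSymm {n : ℕ} (Y : Fin n → ℝ) : (vecMulVec Y Y).IsSymm := by
  unfold Matrix.IsSymm
  ext i j
  simp [Matrix.transpose_apply, Matrix.vecMulVec_apply, mul_comm]

lemma trace_vecMulVec' {n : ℕ} (Y : Fin n → ℝ) : (vecMulVec Y Y).trace = Y ⬝ᵥ Y := by
  simp [Matrix.trace, Matrix.diag, Matrix.vecMulVec_apply, dotProduct]

lemma trace_mul_vecMulVec {n : ℕ} (A : Matrix (Fin n) (Fin n) ℝ) (Y : Fin n → ℝ) :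
    (A * vecMulVec Y Y).trace = Y ⬝ᵥ (A *ᵥ Y) := by
  simp only [Matrix.trace, Matrix.diag, Matrix.mul_apply, Matrix.vecMulVec_apply,
    dotProduct, Matrix.mulVec, Finset.mul_sum]
  exact Finset.sum_congr rfl fun i _ => Finset.sum_congr rfl fun j _ => by ring

lemma qb_vecMulVec_self {n : ℕ} (Y : Fin n → ℝ) :
    qb (vecMulVec Y Y) (vecMulVec Y Y) = 0 := by
  have h : vecMulVec Y Y * vecMulVec Y Y = (Y ⬝ᵥ Y) • vecMulVec Y Y := by
    ext i j
    simp only [Matrix.mul_apply, Matrix.vecMulVec_apply, Matrix.smul_apply, smul_eq_mul,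
      dotProduct, Finset.sum_mul, Finset.mul_sum]
    exact Finset.sum_congr rfl fun k _ => by ring
  simp only [qb, h, Matrix.trace_smul, trace_vecMulVec', smul_eq_mul]
  ring

lemma F_eq {n : ℕ} (x : ℝ) (A : Matrix (Fin n) (Fin n) ℝ) (Y : Fin n → ℝ) :
    x * ((A.trace ^ 2 - (A * A).trace) / 2)
      - Y ⬝ᵥ ((A.trace • (1 : Matrix (Fin n) (Fin n) ℝ) - A) *ᵥ Y)
    = x * qb A A - 2 * qb A (vecMulVec Y Y) := by
  have h1 : Y ⬝ᵥ ((A.trace • (1 : Matrix (Fin n) (Fin n) ℝ) - A) *ᵥ Y)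
      = A.trace * (Y ⬝ᵥ Y) - Y ⬝ᵥ (A *ᵥ Y) := by
    rw [Matrix.sub_mulVec, Matrix.smul_mulVec, Matrix.one_mulVec]
    simp [dotProduct_sub, dotProduct_smul, smul_eq_mul]
  rw [h1]
  simp only [qb, trace_vecMulVec', trace_mul_vecMulVec, sq]
  ring

lemma dot_vecMulVec {n : ℕ} (Y u : Fin n → ℝ) :
    u ⬝ᵥ (vecMulVec Y Y *ᵥ u) = (Y ⬝ᵥ u)^2 := by
  simp only [dotProduct, Matrix.mulVec, Matrix.vecMulVec_apply, dotProduct, sq,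
    Finset.mul_sum, Finset.sum_mul]
  rw [Finset.sum_comm]
  exact Finset.sum_congr rfl fun i _ => Finset.sum_congr rfl fun j _ => by ring

lemma psd_cone {n : ℕ} {D : Matrix (Fin n) (Fin n) ℝ} (hD : D.IsSymm)
    (h : ∀ u : Fin n → ℝ, 0 ≤ u ⬝ᵥ (D *ᵥ u)) :
    0 ≤ D.trace ∧ 0 ≤ qb D D := by
  have hdot : ∀ i j, (Pi.single i (1:ℝ)) ⬝ᵥ (D *ᵥ Pi.single j (1:ℝ)) = D i j := by
    intro i j
    simp [Matrix.mulVec_single, single_dotProduct]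
  have hdiag : ∀ i, 0 ≤ D i i := fun i => by
    have := h (Pi.single i 1); rwa [hdot i i] at this
  have htr : 0 ≤ D.trace := Finset.sum_nonneg fun i _ => hdiag i
  refine ⟨htr, ?_⟩
  have hij : ∀ i j, (D i j)^2 ≤ D i i * D j j := by
    intro i j
    have hq : ∀ t : ℝ, 0 ≤ D j j * (t * t) + (2 * D i j) * t + D i i := by
      intro t
      let e1 : Fin n → ℝ := Pi.single i 1
      let e2 : Fin n → ℝ := Pi.single j 1
      have hu := h (e1 + t • e2)
      have heval : (e1 + t • e2) ⬝ᵥ (D *ᵥ (e1 + t • e2))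
          = D i i + t * D i j + t * D j i + t * t * D j j := by
        rw [Matrix.mulVec_add, Matrix.mulVec_smul]
        simp only [dotProduct_add, add_dotProduct, smul_dotProduct, dotProduct_smul,
          smul_eq_mul, e1, e2, hdot]
        ring
      rw [heval] at hu
      have hsym : D j i = D i j := hD.apply i j
      rw [hsym] at hu
      nlinarith [hu]
    have hd := discrim_le_zero hq
    simp only [discrim] at hd
    nlinarith
  have e1 : (D * D).trace = ∑ i, ∑ j, (D i j)^2 := by
    simp only [Matrix.trace, Matrix.diag, Matrix.mul_apply, sq]
    exact Finset.sum_congr rfl fun i _ => Finset.sum_congr rfl fun j _ => by rw [hD.apply]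
  have e2 : D.trace ^ 2 = ∑ i, ∑ j, D i i * D j j := by
    rw [sq]
    simp only [Matrix.trace, Matrix.diag]
    rw [Finset.sum_mul_sum]
  have hsum : (D * D).trace ≤ D.trace ^ 2 := by
    rw [e1, e2]
    exact Finset.sum_le_sum fun i _ => Finset.sum_le_sum fun j _ => hij i j
  simp only [qb, sq] at hsum ⊢
  nlinarith

lemma scalar_cauchy {a b x x' s : ℝ} (hx : 0 < x) (hx' : 0 < x')
    (hs0 : 0 ≤ s) (hs1 : s ≤ 1) (hxs : 0 < s * x + (1 - s) * x') :
    (s * a + (1 - s) * b)^2 / (s * x + (1 - s) * x') ≤ s * ((a^2) / x) + (1 - s) * ((b^2) / x') := by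
  rw [div_le_iff₀ hxs]
  have key : (s * (a^2/x) + (1-s) * (b^2/x')) * (s*x + (1-s)*x') - (s*a + (1-s)*b)^2
      = s * (1-s) * (a*x' - b*x)^2 / (x*x') := by
    field_simp
    ring
  nlinarith [div_nonneg (mul_nonneg (mul_nonneg hs0 (by linarith : (0:ℝ) ≤ 1 - s))
    (sq_nonneg (a*x' - b*x))) (mul_pos hx hx').le]

lemma combo_pos {p p' s : ℝ} (hp : 0 < p) (hp' : 0 < p') (hs0 : 0 ≤ s) (hs1 : s ≤ 1) :
    0 < s * p + (1 - s) * p' := by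
  rcases eq_or_lt_of_le hs0 with h | h
  · rw [← h]; simpa using hp'
  · nlinarith

set_option maxHeartbeats 1000000 in
/-- concavity of `G = log F` where
`F(x, r, Y) = x·σ₂(r) - Yᵀ T₁(r) Y`, on the domain `r ∈ Γ₂⁺`, `F > 0`. -/
theorem logF_concave (n : ℕ) (x x' : ℝ) (r r' : Matrix (Fin n) (Fin n) ℝ)
    (hr : r.IsSymm) (hr' : r'.IsSymm)
    (h1 : 0 < r.trace) (h2 : 0 < (r.trace ^ 2 - (r * r).trace) / 2)
    (h1' : 0 < r'.trace) (h2' : 0 < (r'.trace ^ 2 - (r' * r').trace) / 2)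
    (Y Y' : Fin n → ℝ)
    (hF : 0 < x * ((r.trace ^ 2 - (r * r).trace) / 2)
        - Y ⬝ᵥ ((r.trace • (1 : Matrix (Fin n) (Fin n) ℝ) - r) *ᵥ Y))
    (hF' : 0 < x' * ((r'.trace ^ 2 - (r' * r').trace) / 2)
        - Y' ⬝ᵥ ((r'.trace • (1 : Matrix (Fin n) (Fin n) ℝ) - r') *ᵥ Y'))
    (s : ℝ) (hs0 : 0 ≤ s) (hs1 : s ≤ 1) :
    Real.log ((s * x + (1 - s) * x')
        * (((s • r + (1 - s) • r').trace ^ 2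
            - ((s • r + (1 - s) • r') * (s • r + (1 - s) • r')).trace) / 2)
        - (s • Y + (1 - s) • Y') ⬝ᵥ
            (((s • r + (1 - s) • r').trace • (1 : Matrix (Fin n) (Fin n) ℝ)
              - (s • r + (1 - s) • r')) *ᵥ (s • Y + (1 - s) • Y')))
      ≥ s * Real.log (x * ((r.trace ^ 2 - (r * r).trace) / 2)
            - Y ⬝ᵥ ((r.trace • (1 : Matrix (Fin n) (Fin n) ℝ) - r) *ᵥ Y))
        + (1 - s) * Real.log (x' * ((r'.trace ^ 2 - (r' * r').trace) / 2)
            - Y' ⬝ᵥ ((r'.trace • (1 : Matrix (Fin n) (Fin n) ℝ) - r') *ᵥ Y')) := by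
  have hs2 : (0:ℝ) ≤ 1 - s := by linarith
  rw [F_eq] at hF hF'
  rw [F_eq, F_eq, F_eq]
  set N := vecMulVec Y Y with hNdef
  set N' := vecMulVec Y' Y' with hN'def
  set Ys : Fin n → ℝ := s • Y + (1 - s) • Y' with hYsdef
  set rs : Matrix (Fin n) (Fin n) ℝ := s • r + (1 - s) • r' with hrsdef
  set Ns := vecMulVec Ys Ys with hNsdef
  set X := s * x + (1 - s) * x' with hXdef
  -- basic symmetry
  have hNsymm : N.IsSymm := vecMulVec_isSymm Y
  have hN'symm : N'.IsSymm := vecMulVec_isSymm Y'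
  have hNssymm : Ns.IsSymm := vecMulVec_isSymm Ys
  have hrssymm : rs.IsSymm := isSymm_comb s (1 - s) hr hr'
  have hqNN : qb N N = 0 := by rw [hNdef]; exact qb_vecMulVec_self Y
  have hqNN' : qb N' N' = 0 := by rw [hN'def]; exact qb_vecMulVec_self Y'
  have hqNsNs : qb Ns Ns = 0 := by rw [hNsdef]; exact qb_vecMulVec_self Ys
  have htrN : N.trace = Y ⬝ᵥ Y := by rw [hNdef]; exact trace_vecMulVec' Y
  have htrN' : N'.trace = Y' ⬝ᵥ Y' := by rw [hN'def]; exact trace_vecMulVec' Y'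
  -- σ₂ positivity in qb form
  have hq2 : 0 < qb r r := by
    have : qb r r = (r.trace ^ 2 - (r * r).trace) / 2 := by rw [qb, pow_two]
    rw [this]; exact h2
  have hq2' : 0 < qb r' r' := by
    have : qb r' r' = (r'.trace ^ 2 - (r' * r').trace) / 2 := by rw [qb, pow_two]
    rw [this]; exact h2'
  -- qb r N ≥ 0
  have hYY : 0 ≤ Y ⬝ᵥ Y := Finset.sum_nonneg fun i _ => mul_self_nonneg _
  have hYY' : 0 ≤ Y' ⬝ᵥ Y' := Finset.sum_nonneg fun i _ => mul_self_nonneg _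
  have hK : 0 ≤ qb r N := by
    have h := qb_cs hr hNsymm h1 hq2 (by rw [hNdef, trace_vecMulVec']; exact hYY)
      (by rw [hNdef, qb_vecMulVec_self])
    rw [hNdef, qb_vecMulVec_self, mul_zero, Real.sqrt_zero] at h
    exact h
  have hK' : 0 ≤ qb r' N' := by
    have h := qb_cs hr' hN'symm h1' hq2' (by rw [hN'def, trace_vecMulVec']; exact hYY')
      (by rw [hN'def, qb_vecMulVec_self])
    rw [hN'def, qb_vecMulVec_self, mul_zero, Real.sqrt_zero] at h
    exact h
  -- positivity of x, x', X
  have hx : 0 < x := by by_contra hc; push_neg at hc; nlinarith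
  have hx' : 0 < x' := by by_contra hc; push_neg at hc; nlinarith
  have hX : 0 < X := combo_pos hx hx' hs0 hs1
  -- the shifted matrices B = r - x⁻¹ N  etc.
  set B : Matrix (Fin n) (Fin n) ℝ := (1:ℝ) • r + (-(x⁻¹)) • N with hBdef
  set B' : Matrix (Fin n) (Fin n) ℝ := (1:ℝ) • r' + (-(x'⁻¹)) • N' with hB'def
  set Bs : Matrix (Fin n) (Fin n) ℝ := (1:ℝ) • rs + (-(X⁻¹)) • Ns with hBsdef
  have hBsymm : B.IsSymm := isSymm_comb _ _ hr hNsymm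
  have hB'symm : B'.IsSymm := isSymm_comb _ _ hr' hN'symm
  have hBssymm : Bs.IsSymm := isSymm_comb _ _ hrssymm hNssymm
  have hBval : qb B B = qb r r - 2 * x⁻¹ * qb r N := by
    rw [hBdef, qb_expand, hqNN]; ring
  have hB'val : qb B' B' = qb r' r' - 2 * x'⁻¹ * qb r' N' := by
    rw [hB'def, qb_expand, hqNN']; ring
  have hBsval : qb Bs Bs = qb rs rs - 2 * X⁻¹ * qb rs Ns := by
    rw [hBsdef, qb_expand, hqNsNs]; ring
  have ha : 0 < qb B B := by
    have : qb B B = (x * qb r r - 2 * qb r N) / x := by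
      rw [hBval]; field_simp
    rw [this]; exact div_pos hF hx
  have ha' : 0 < qb B' B' := by
    have : qb B' B' = (x' * qb r' r' - 2 * qb r' N') / x' := by
      rw [hB'val]; field_simp
    rw [this]; exact div_pos hF' hx'
  -- positivity of the traces of B, B'
  have htB : 0 < B.trace := by
    have htrB : B.trace = r.trace - x⁻¹ * (Y ⬝ᵥ Y) := by
      rw [hBdef]
      simp [Matrix.trace_add, Matrix.trace_smul, htrN, smul_eq_mul]
      ring
    by_contra hc
    push_neg at hc
    rw [htrB] at hc
    have hwpos : 0 < Y ⬝ᵥ Y := by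
      rcases hYY.lt_or_eq with h | h
      · exact h
      · exfalso; rw [← h, mul_zero, sub_zero] at hc; linarith
    set t₀ : ℝ := r.trace / (Y ⬝ᵥ Y) with ht₀def
    have htr0 : ((1:ℝ) • r + (-t₀) • N).trace = 0 := by
      simp only [Matrix.trace_add, Matrix.trace_smul, smul_eq_mul, one_mul, neg_mul,
        htrN, ht₀def]
      field_simp
      ring
    have hC0 := qb_self_nonpos _ (isSymm_comb 1 (-t₀) hr hNsymm) htr0
    rw [qb_expand, hqNN] at hC0
    have ht₀le : t₀ ≤ x⁻¹ := by
      rw [ht₀def, div_le_iff₀ hwpos]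
      linarith
    nlinarith [mul_nonneg (sub_nonneg.2 ht₀le) hK, ha, hBval]
  have htB' : 0 < B'.trace := by
    have htrB : B'.trace = r'.trace - x'⁻¹ * (Y' ⬝ᵥ Y') := by
      rw [hB'def]
      simp [Matrix.trace_add, Matrix.trace_smul, htrN', smul_eq_mul]
      ring
    by_contra hc
    push_neg at hc
    rw [htrB] at hc
    have hwpos : 0 < Y' ⬝ᵥ Y' := by
      rcases hYY'.lt_or_eq with h | h
      · exact h
      · exfalso; rw [← h, mul_zero, sub_zero] at hc; linarith
    set t₀ : ℝ := r'.trace / (Y' ⬝ᵥ Y') with ht₀def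
    have htr0 : ((1:ℝ) • r' + (-t₀) • N').trace = 0 := by
      simp only [Matrix.trace_add, Matrix.trace_smul, smul_eq_mul, one_mul, neg_mul,
        htrN', ht₀def]
      field_simp
      ring
    have hC0 := qb_self_nonpos _ (isSymm_comb 1 (-t₀) hr' hN'symm) htr0
    rw [qb_expand, hqNN'] at hC0
    have ht₀le : t₀ ≤ x'⁻¹ := by
      rw [ht₀def, div_le_iff₀ hwpos]
      linarith
    nlinarith [mul_nonneg (sub_nonneg.2 ht₀le) hK', ha', hB'val]
  -- reverse Cauchy–Schwarz between B and B'
  have hBB' : Real.sqrt (qb B B * qb B' B') ≤ qb B B' :=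
    qb_cs hBsymm hB'symm htB ha htB'.le ha'.le
  -- the convex combination C of B and B'
  set C : Matrix (Fin n) (Fin n) ℝ := s • B + (1 - s) • B' with hCdef
  have hCsymm : C.IsSymm := isSymm_comb _ _ hBsymm hB'symm
  have hCval : qb C C = s^2 * qb B B + (2*s*(1-s)) * qb B B' + (1-s)^2 * qb B' B' := by
    rw [hCdef, qb_expand]
  set sa := Real.sqrt (qb B B) with hsadef
  set sa' := Real.sqrt (qb B' B') with hsa'def
  have hsa : 0 < sa := Real.sqrt_pos.2 ha
  have hsa' : 0 < sa' := Real.sqrt_pos.2 ha'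
  have hprod : sa * sa' ≤ qb B B' := by
    rw [hsadef, hsa'def, ← Real.sqrt_mul ha.le]; exact hBB'
  have hCge : (s * sa + (1 - s) * sa')^2 ≤ qb C C := by
    rw [hCval]
    nlinarith [mul_nonneg (mul_nonneg hs0 hs2) (sub_nonneg.2 hprod),
      Real.sq_sqrt ha.le, Real.sq_sqrt ha'.le]
  have hcomb : 0 < s * sa + (1 - s) * sa' := combo_pos hsa hsa' hs0 hs1
  have hqC : 0 < qb C C := lt_of_lt_of_le (pow_pos hcomb 2) hCge
  have htC : 0 < C.trace := by
    have : C.trace = s * B.trace + (1 - s) * B'.trace := by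
      rw [hCdef]; simp [Matrix.trace_add, Matrix.trace_smul, smul_eq_mul]
    rw [this]; exact combo_pos htB htB' hs0 hs1
  -- the PSD correction term D
  set D : Matrix (Fin n) (Fin n) ℝ := (1:ℝ) • Bs + (-1:ℝ) • C with hDdef
  have hDsymm : D.IsSymm := isSymm_comb _ _ hBssymm hCsymm
  have hDpsd : ∀ u : Fin n → ℝ, 0 ≤ u ⬝ᵥ (D *ᵥ u) := by
    intro u
    have hu : u ⬝ᵥ (D *ᵥ u)
        = s * ((Y ⬝ᵥ u)^2 / x) + (1 - s) * ((Y' ⬝ᵥ u)^2 / x')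
          - (s * (Y ⬝ᵥ u) + (1 - s) * (Y' ⬝ᵥ u))^2 / X := by
      have hYsu : Ys ⬝ᵥ u = s * (Y ⬝ᵥ u) + (1 - s) * (Y' ⬝ᵥ u) := by
        rw [hYsdef]
        simp [add_dotProduct, smul_dotProduct, smul_eq_mul]
      rw [hDdef, hBsdef, hCdef, hBdef, hB'def, hrsdef]
      simp only [Matrix.add_mulVec, Matrix.smul_mulVec, dotProduct_add,
        dotProduct_smul, smul_eq_mul, hNdef, hN'def, hNsdef, dot_vecMulVec, hYsu]
      field_simp
      ring
    rw [hu]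
    have := scalar_cauchy (a := Y ⬝ᵥ u) (b := Y' ⬝ᵥ u) hx hx' hs0 hs1 hX
    linarith
  obtain ⟨htD, hqD⟩ := psd_cone hDsymm hDpsd
  have hCD : 0 ≤ qb C D := le_trans (Real.sqrt_nonneg _)
    (qb_cs hCsymm hDsymm htC hqC htD hqD)
  -- qb Bs Bs ≥ qb C C
  have hBsCD : Bs = (1:ℝ) • C + (1:ℝ) • D := by
    rw [hDdef]; module
  have hBsexp : qb Bs Bs = qb C C + 2 * qb C D + qb D D := by
    rw [hBsCD, qb_expand]; ring
  have hBsge : (s * sa + (1 - s) * sa')^2 ≤ qb Bs Bs := by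
    rw [hBsexp]; linarith
  -- rewrite the target F_s
  have hFs : X * qb rs rs - 2 * qb rs Ns = X * qb Bs Bs := by
    rw [hBsval]; field_simp
  have hFs_ge : X * (s * sa + (1 - s) * sa')^2 ≤ X * qb rs rs - 2 * qb rs Ns := by
    rw [hFs]; exact mul_le_mul_of_nonneg_left hBsge hX.le
  have hmidpos : 0 < X * (s * sa + (1 - s) * sa')^2 := mul_pos hX (pow_pos hcomb 2)
  -- the logarithmic estimates
  have hlogx : s * Real.log x + (1 - s) * Real.log x' ≤ Real.log X := by
    have := (strictConcaveOn_log_Ioi.concaveOn).2 (Set.mem_Ioi.2 hx) (Set.mem_Ioi.2 hx')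
      hs0 hs2 (by ring)
    simpa [smul_eq_mul, hXdef] using this
  have hloga : s * Real.log sa + (1 - s) * Real.log sa'
      ≤ Real.log (s * sa + (1 - s) * sa') := by
    have := (strictConcaveOn_log_Ioi.concaveOn).2 (Set.mem_Ioi.2 hsa) (Set.mem_Ioi.2 hsa')
      hs0 hs2 (by ring)
    simpa [smul_eq_mul] using this
  have hlogsa : Real.log sa = Real.log (qb B B) / 2 := Real.log_sqrt ha.le
  have hlogsa' : Real.log sa' = Real.log (qb B' B') / 2 := Real.log_sqrt ha'.le
  have hlogsq : Real.log ((s * sa + (1 - s) * sa')^2)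
      = 2 * Real.log (s * sa + (1 - s) * sa') := by
    rw [Real.log_pow]; norm_num
  have hlogmid : Real.log (X * (s * sa + (1 - s) * sa')^2)
      = Real.log X + Real.log ((s * sa + (1 - s) * sa')^2) :=
    Real.log_mul hX.ne' (pow_pos hcomb 2).ne'
  have hlogmono : Real.log (X * (s * sa + (1 - s) * sa')^2)
      ≤ Real.log (X * qb rs rs - 2 * qb rs Ns) :=
    Real.log_le_log hmidpos hFs_ge
  -- decompose log F, log F'
  have hFx : x * qb r r - 2 * qb r N = x * qb B B := by
    rw [hBval]; field_simp
  have hFx' : x' * qb r' r' - 2 * qb r' N' = x' * qb B' B' := by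
    rw [hB'val]; field_simp
  have hlogF : Real.log (x * qb r r - 2 * qb r N) = Real.log x + Real.log (qb B B) := by
    rw [hFx]; exact Real.log_mul hx.ne' ha.ne'
  have hlogF' : Real.log (x' * qb r' r' - 2 * qb r' N') = Real.log x' + Real.log (qb B' B') := by
    rw [hFx']; exact Real.log_mul hx'.ne' ha'.ne'
  rw [ge_iff_le, hlogF, hlogF']
  calc s * (Real.log x + Real.log (qb B B)) + (1 - s) * (Real.log x' + Real.log (qb B' B'))
      = (s * Real.log x + (1 - s) * Real.log x')
        + 2 * (s * Real.log sa + (1 - s) * Real.log sa') := by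
        rw [hlogsa, hlogsa']; ring
    _ ≤ Real.log X + 2 * Real.log (s * sa + (1 - s) * sa') := by linarith
    _ = Real.log (X * (s * sa + (1 - s) * sa')^2) := by rw [hlogmid, hlogsq]
    _ ≤ Real.log (X * qb rs rs - 2 * qb rs Ns) := hlogmono
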